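/- arXiv:1807.00648 — 5 statements merged into one kernel-verified Lean document; each statement's English description precedes it below -/
import Mathlib

section
/- Let n ≥ 2 and k = ⌊log₂ n⌋. The sequence (1, 2, 4, ..., 2^{k−1}) in Z_n is not a {1, −1}-weighted Davenport Z-sequence: there is no tuple (a_1,...,a_k) ∈ {−1, 0, 1}^k, not all zero, with ∑_i a_i 2^{i−1} ≡ 0 (mod n). -/
/-!
Digits `aᵢ ∈ {-1, 0, 1}` have absolute value below `2`, so base-`2` expansions with such digits
are unique: a sum `∑ aᵢ 2ⁱ` with some `aᵢ ≠ 0` is nonzero. It is also smaller than `2ᵏ ≤ n` in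
absolute value, so `n` cannot divide it.
-/

namespace Int

variable {b : ℤ}

lemma sum_fin_succ_mul_pow {k : ℕ} (a : Fin (k + 1) → ℤ) :
    ∑ i, a i * b ^ (i : ℕ) = a 0 + b * ∑ i : Fin k, a i.succ * b ^ (i : ℕ) := by
  simp only [Fin.sum_univ_succ, Fin.val_zero, pow_zero, mul_one, Fin.val_succ, pow_succ,
    Finset.mul_sum]
  congr 1
  exact Finset.sum_congr rfl fun i _ ↦ by ring

lemma abs_sum_mul_pow_lt {k : ℕ} (a : Fin k → ℤ) (ha : ∀ i, |a i| < b) :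
    |∑ i, a i * b ^ (i : ℕ)| < b ^ k := by
  induction k with
  | zero => simp
  | succ k ih =>
    have hb : 0 < b := (abs_nonneg _).trans_lt (ha 0)
    have htail := ih (fun i ↦ a i.succ) fun i ↦ ha _
    rw [sum_fin_succ_mul_pow]
    calc |a 0 + b * ∑ i : Fin k, a i.succ * b ^ (i : ℕ)|
        ≤ |a 0| + b * |∑ i : Fin k, a i.succ * b ^ (i : ℕ)| :=
          (abs_add_le _ _).trans_eq (by rw [abs_mul, abs_of_pos hb])
      _ ≤ (b - 1) + b * (b ^ k - 1) := by
          gcongr <;> linarith [ha 0]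
      _ < b ^ (k + 1) := by rw [pow_succ]; linarith

lemma eq_zero_of_sum_mul_pow_eq_zero {k : ℕ} (a : Fin k → ℤ) (ha : ∀ i, |a i| < b)
    (hsum : ∑ i, a i * b ^ (i : ℕ) = 0) : a = 0 := by
  induction k with
  | zero => exact funext finZeroElim
  | succ k ih =>
    rw [sum_fin_succ_mul_pow] at hsum
    have hb : b ≠ 0 := ((abs_nonneg _).trans_lt (ha 0)).ne'
    have hdvd : b ∣ a 0 := by
      rw [eq_neg_of_add_eq_zero_left hsum]; exact (dvd_mul_right _ _).neg_right
    have h0 : a 0 = 0 := eq_zero_of_abs_lt_dvd hdvd (ha 0)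
    rw [h0, zero_add, mul_eq_zero, or_iff_right hb] at hsum
    have htail := ih (fun i ↦ a i.succ) (fun i ↦ ha _) hsum
    funext i
    exact Fin.cases h0 (fun j ↦ congrFun htail j) i

end Int

theorem powers_of_two_not_pm_one_weighted_davenport (n : ℕ) (hn : 2 ≤ n) (k : ℕ)
    (hk : k = Nat.log 2 n) :
    ¬ ∃ a : Fin k → ℤ, (∀ i, a i = -1 ∨ a i = 0 ∨ a i = 1) ∧ (∃ i, a i ≠ 0) ∧
      (n : ℤ) ∣ ∑ i, a i * 2 ^ (i : ℕ) := by
  rintro ⟨a, ha, ⟨i, hi⟩, hdvd⟩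
  have hdigit : ∀ i, |a i| < 2 := fun i ↦ by rcases ha i with h | h | h <;> simp [h]
  have hpow : (2 : ℤ) ^ k ≤ n := by
    rw [hk]; exact_mod_cast Nat.pow_log_le_self 2 (by omega)
  have hsum : ∑ i, a i * 2 ^ (i : ℕ) = 0 :=
    Int.eq_zero_of_abs_lt_dvd hdvd ((Int.abs_sum_mul_pow_lt a hdigit).trans_le hpow)
  exact hi (congrFun (Int.eq_zero_of_sum_mul_pow_eq_zero a hdigit hsum) i)
end

section
/- Let n = q_1 q_2 ⋯ q_a be a product of a primes (not necessarily distinct). The Z_n-sequence (1, q_1, q_1 q_2, ..., q_1 ⋯ q_{a−1}) of length a is not a Z_n^*-weighted Davenport Z-sequence: there is no choice of coefficients a_i ∈ Z_n^* ∪ {0}, not all zero, with ∑_i a_i x_i = 0 in Z_n. -/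
/-!
Write `P k = q 0 * ⋯ * q (k - 1)`, so the sequence is `(P 0, …, P (a - 1))` and `n = P a`.
Let `i` be the first index with `c i ≠ 0` and reduce the relation `∑ c k * P k = 0` modulo
`P (i + 1) ∣ n`: the terms before `i` vanish because their coefficients do, and those after `i`
because `P (i + 1) ∣ P k`. What is left is `c i * P i ≡ 0 mod P i * q i`, and since `c i` stays a
unit modulo `P (i + 1)`, this forces `P i * q i ∣ P i`, i.e. `q i = 1`.
-/

open Finset

lemma natCast_prod_range_eq_zero (q : ℕ → ℕ) {k l : ℕ} (h : l ≤ k) :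
    ((∏ j ∈ range k, q j : ℕ) : ZMod (∏ j ∈ range l, q j)) = 0 :=
  (ZMod.natCast_eq_zero_iff _ _).2 (prod_dvd_prod_of_subset _ _ _ (range_subset_range.2 h))

lemma ZMod.natCast_ne_zero_of_ne_one {d e : ℕ} (hd : d ≠ 0) (he : e ≠ 1) :
    (d : ZMod (d * e)) ≠ 0 := by
  rw [Ne, ZMod.natCast_eq_zero_iff]
  intro h
  rw [← mul_one d, mul_assoc, one_mul, Nat.mul_dvd_mul_iff_left (Nat.pos_of_ne_zero hd)] at h
  exact he (Nat.dvd_one.1 h)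

lemma sum_mul_prod_range_eq_of_forall_lt_eq_zero {a : ℕ} (q : ℕ → ℕ) (i : Fin a)
    (c : Fin a → ZMod (∏ j ∈ range (i + 1), q j)) (hc : ∀ k < i, c k = 0) :
    ∑ k : Fin a, c k * ((∏ j ∈ range (k : ℕ), q j : ℕ) : ZMod _) =
      c i * ((∏ j ∈ range (i : ℕ), q j : ℕ) : ZMod _) := by
  refine sum_eq_single i (fun k _ hki => ?_) (by simp)
  rcases lt_or_gt_of_ne hki with hlt | hgt
  · rw [hc k hlt, zero_mul]
  · rw [natCast_prod_range_eq_zero q (Nat.succ_le_of_lt hgt), mul_zero]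

theorem prime_products_not_unit_weighted_davenport (a : ℕ) (q : ℕ → ℕ)
    (hq : ∀ i < a, (q i).Prime) (n : ℕ) (hn : n = ∏ i ∈ Finset.range a, q i) :
    ¬ ∃ c : Fin a → ZMod n,
        (∀ i, c i = 0 ∨ IsUnit (c i)) ∧ (∃ i, c i ≠ 0) ∧
        ∑ i : Fin a, c i * ((∏ j ∈ Finset.range (i : ℕ), q j : ℕ) : ZMod n) = 0 := by
  rintro ⟨c, hunit, ⟨i₁, hi₁⟩, hsum⟩
  obtain ⟨i, hi, hmin⟩ := (univ.filter (c · ≠ 0)).exists_min_image id ⟨i₁, by simpa using hi₁⟩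
  have hci : c i ≠ 0 := (mem_filter.1 hi).2
  have hbefore : ∀ k < i, c k = 0 := fun k hk => by
    by_contra hck
    exact absurd (hmin k (by simpa using hck)) (not_le.2 hk)
  have hdvd : (∏ j ∈ range (i + 1), q j) ∣ n :=
    hn ▸ prod_dvd_prod_of_subset _ _ _ (range_subset_range.2 i.2)
  let φ := ZMod.castHom hdvd (ZMod (∏ j ∈ range (i + 1), q j))
  have hreduced : φ (c i) * ((∏ j ∈ range (i : ℕ), q j : ℕ) : ZMod _) = 0 := by
    rw [← sum_mul_prod_range_eq_of_forall_lt_eq_zero q i (fun k => φ (c k))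
      (fun k hk => by simp [hbefore k hk])]
    simpa using congrArg φ hsum
  have hPi : ∏ j ∈ range (i : ℕ), q j ≠ 0 :=
    prod_ne_zero_iff.2 fun j hj => (hq j ((mem_range.1 hj).trans i.2)).ne_zero
  rw [((hunit i).resolve_left hci).map φ |>.mul_right_eq_zero, prod_range_succ] at hreduced
  exact ZMod.natCast_ne_zero_of_ne_one hPi (hq i i.2).ne_one hreduced
end

section
/- For every n ≥ 2, every Z_n-sequence of length n + 2 in which no element of Z_n appears more than twice contains a subsequence of exactly n terms summing to zero. That is, s^(2)(Z_n) ≤ n + 2. -/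
/-!
Writing `S` for the sum of the whole sequence, it suffices to find two distinct terms with sum
`S`: the remaining `n` terms then sum to zero. Let `c v` be the multiplicity of the value `v`.
If no two distinct terms sum to `S`, then `c v + c (S - v) ≤ 2` for every `v`: the values `v` and
`S - v` cannot both occur unless they coincide, and then `v` occurs at most once. Summing over
all `v ∈ ℤ/n` gives `2 (n + 2) ≤ 2 n`, a contradiction.
-/

open Finset

section Fibers

variable {ι G : Type*} [Fintype ι] [AddCommGroup G] [DecidableEq G] (f : ι → G)

theorem card_filter_add_card_filter_sub_le_two (s v : G)
    (hmult : ∀ z : G, (univ.filter fun i => f i = z).card ≤ 2)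
    (hs : ∀ i j, i ≠ j → f i + f j ≠ s) :
    (univ.filter fun i => f i = v).card + (univ.filter fun i => f i = s - v).card ≤ 2 := by
  by_cases hv : (univ.filter fun i => f i = v).card = 0
  · simpa [hv] using hmult (s - v)
  by_cases hsv : (univ.filter fun i => f i = s - v).card = 0
  · simpa [hsv] using hmult v
  obtain ⟨i, hi⟩ := card_pos.mp (Nat.pos_of_ne_zero hv)
  obtain ⟨j, hj⟩ := card_pos.mp (Nat.pos_of_ne_zero hsv)
  rw [mem_filter] at hi hj
  obtain rfl : i = j := by
    by_contra hij
    exact hs i j hij (by rw [hi.2, hj.2, add_sub_cancel])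
  have hself : s - v = v := hj.2.symm.trans hi.2
  rw [hself, ← two_mul]
  by_contra! hgt
  obtain ⟨a, ha, b, hb, hab⟩ := one_lt_card.mp (by omega : 1 < (univ.filter fun i => f i = v).card)
  rw [mem_filter] at ha hb
  exact hs a b hab (by rw [ha.2, hb.2]; nth_rw 2 [← hself]; exact add_sub_cancel v s)

variable [Fintype G] [DecidableEq ι]

theorem exists_ne_add_eq_of_card_lt (hcard : Fintype.card G < Fintype.card ι)
    (hmult : ∀ z : G, (univ.filter fun i => f i = z).card ≤ 2) (s : G) :
    ∃ i j, i ≠ j ∧ f i + f j = s := by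
  by_contra! hs
  have hfiber : ∑ v : G, (univ.filter fun i => f i = v).card = Fintype.card ι :=
    (card_eq_sum_card_fiberwise fun i _ => mem_univ (f i)).symm
  have hfiber' : ∑ v : G, (univ.filter fun i => f i = s - v).card = Fintype.card ι := by
    rw [← hfiber]
    exact Fintype.sum_equiv (Equiv.subLeft s) _ _ fun _ => rfl
  have : 2 * Fintype.card ι ≤ 2 * Fintype.card G := by
    calc 2 * Fintype.card ι
        = ∑ v : G, ((univ.filter fun i => f i = v).card
            + (univ.filter fun i => f i = s - v).card) := by
          rw [sum_add_distrib, hfiber, hfiber', two_mul]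
      _ ≤ ∑ _v : G, 2 :=
          sum_le_sum fun v _ => card_filter_add_card_filter_sub_le_two f s v hmult hs
      _ = 2 * Fintype.card G := by rw [sum_const, card_univ, smul_eq_mul, mul_comm]
  omega

end Fibers

theorem s_two_upper_bound (n : ℕ) (hn : 2 ≤ n) (f : Fin (n + 2) → ZMod n)
    (hmult : ∀ z : ZMod n, (Finset.univ.filter fun i => f i = z).card ≤ 2) :
    ∃ I : Finset (Fin (n + 2)), I.card = n ∧ ∑ i ∈ I, f i = 0 := by
  have : NeZero n := ⟨by omega⟩
  obtain ⟨i, j, hij, hsum⟩ := exists_ne_add_eq_of_card_lt f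
    (by simp only [ZMod.card, Fintype.card_fin]; omega) hmult (∑ k, f k)
  refine ⟨{i, j}ᶜ, ?_, ?_⟩
  · rw [card_compl, Fintype.card_fin, card_pair hij, Nat.add_sub_cancel]
  · have := sum_compl_add_sum {i, j} f
    rw [sum_pair hij, hsum] at this
    exact add_eq_right.mp this
end

section
/- For every prime p and every integer k ≥ 2, every Z_p-sequence of length p + k in which no element appears more than k times contains a subsequence of exactly p terms summing to zero; i.e., s^(k)(Z_p) ≤ p + k. -/
/-!
Sort the sequence. A value occurring at most `k` times occupies at most `k` consecutive positions,
so terms whose positions are congruent mod `k` are pairwise distinct: the `k` residue classes of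
positions give `k` nonempty sets `D₁, …, Dₖ ⊆ ℤ/p` with `∑ |Dᵣ| = p + k`. By Cauchy–Davenport the
sumset `D₁ + ⋯ + Dₖ` has at least `min(p, ∑ (|Dᵣ| - 1) + 1) = p` elements, so it contains the total
sum `S` of the sequence. Taking one term from each class with sum `S`, the remaining `p` terms sum
to zero.
-/

open Finset Pointwise

namespace ZMod

variable {p : ℕ} {ι : Type*}

theorem min_le_card_finsetSum (hp : p.Prime) (s : Finset ι) {D : ι → Finset (ZMod p)}
    (hD : ∀ i ∈ s, (D i).Nonempty) :
    min p (∑ i ∈ s, (#(D i) - 1) + 1) ≤ #(∑ i ∈ s, D i) := by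
  classical
  induction s using Finset.induction_on with
  | empty => simp
  | insert a s ha ih =>
    rw [sum_insert ha, sum_insert ha]
    have hDa := (hD a (mem_insert_self a s)).card_pos
    have ih := ih fun i hi => hD i (mem_insert_of_mem hi)
    have hT : (∑ i ∈ s, D i).Nonempty := card_pos.1 (by have := hp.pos; omega)
    calc min p (#(D a) - 1 + ∑ i ∈ s, (#(D i) - 1) + 1)
        ≤ min p (#(D a) + #(∑ i ∈ s, D i) - 1) := by omega
      _ ≤ #(D a + ∑ i ∈ s, D i) := ZMod.cauchy_davenport hp (hD a (mem_insert_self a s)) hT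

theorem exists_sum_eq_of_le_finsetSum_card (hp : p.Prime) {s : Finset ι}
    {D : ι → Finset (ZMod p)} (hD : ∀ i ∈ s, (D i).Nonempty)
    (hcard : p ≤ ∑ i ∈ s, (#(D i) - 1) + 1) (t : ZMod p) :
    ∃ x : ι → ZMod p, (∀ i ∈ s, x i ∈ D i) ∧ ∑ i ∈ s, x i = t := by
  have : Fact p.Prime := ⟨hp⟩
  have hsum : ∑ i ∈ s, D i = univ := by
    apply eq_univ_of_card
    have := min_le_card_finsetSum hp s hD
    have := card_le_univ (∑ i ∈ s, D i)
    rw [ZMod.card] at *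
    omega
  have ht : t ∈ ∑ i ∈ s, D i := hsum ▸ mem_univ t
  rw [← mem_coe, coe_sum, Set.mem_finsetSum] at ht
  obtain ⟨x, hx, rfl⟩ := ht
  exact ⟨x, fun i hi => hx hi, rfl⟩

theorem exists_card_eq_sum_eq_zero_of_injOn_fibers (hp : p.Prime) {κ : Type*} [Fintype ι]
    [Fintype κ] (f : ι → ZMod p) (c : ι → κ) (hc : Function.Surjective c)
    (hinj : ∀ r, Set.InjOn f {i | c i = r}) (hcard : Fintype.card ι = p + Fintype.card κ) :
    ∃ I : Finset ι, #I = p ∧ ∑ i ∈ I, f i = 0 := by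
  classical
  set C : κ → Finset ι := fun r => {i | c i = r}
  set D : κ → Finset (ZMod p) := fun r => (C r).image f
  have hC : ∀ r, (C r).Nonempty := fun r => (hc r).imp fun i hi => by simp [C, hi]
  have hD : ∀ r ∈ univ, (D r).Nonempty := fun r _ => (hC r).image f
  have hDcard : ∀ r, #(D r) = #(C r) := fun r => card_image_of_injOn (by simpa [C] using hinj r)
  have hsizes : ∑ r, (#(D r) - 1) + Fintype.card κ = Fintype.card ι :=
    calc ∑ r, (#(D r) - 1) + Fintype.card κ = ∑ r, #(C r) := by
          rw [← card_univ, card_eq_sum_ones, ← sum_add_distrib]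
          exact sum_congr rfl fun r _ => by rw [hDcard, Nat.sub_add_cancel (hC r).card_pos]
      _ = Fintype.card ι := (card_eq_sum_card_fiberwise fun _ _ => mem_univ _).symm
  obtain ⟨x, hx, hxsum⟩ :=
    exists_sum_eq_of_le_finsetSum_card hp hD (by omega) (∑ i, f i)
  choose d hdC hdf using fun r => mem_image.1 (hx r (mem_univ r))
  have hcd : ∀ r, c (d r) = r := fun r => (mem_filter.1 (hdC r)).2
  have hd : Function.Injective d := fun r r' h => by rw [← hcd r, ← hcd r', h]
  refine ⟨(univ.image d)ᶜ, ?_, ?_⟩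
  · rw [card_compl, card_image_of_injective _ hd, card_univ]
    omega
  · have hJ : ∑ i ∈ univ.image d, f i = ∑ i, f i := by
      rw [sum_image fun r _ r' _ h => hd h, ← hxsum]
      exact sum_congr rfl fun r _ => hdf r
    simpa [hJ] using sum_compl_add_sum (univ.image d) f

end ZMod

section SortedColoring

variable {α : Type*} [LinearOrder α] {n k : ℕ}

theorem Monotone.lt_of_add_le_of_card_fiber_le {g : Fin n → α} (hg : Monotone g)
    (hmult : ∀ z, #{i | g i = z} ≤ k) {i j : Fin n} (hij : (i : ℕ) + k ≤ j) : g i < g j := by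
  by_contra! hji
  have hconst : Icc i j ⊆ ({t | g t = g i} : Finset (Fin n)) := fun t ht => by
    obtain ⟨hit, htj⟩ := mem_Icc.1 ht
    simpa using le_antisymm ((hg htj).trans hji) (hg hit)
  have := (card_le_card hconst).trans (hmult (g i))
  rw [Fin.card_Icc] at this
  omega

theorem Monotone.injOn_mod_eq_of_card_fiber_le {g : Fin n → α} (hg : Monotone g)
    (hmult : ∀ z, #{i | g i = z} ≤ k) (r : ℕ) : Set.InjOn g {i | (i : ℕ) % k = r} := by
  have key : ∀ i j : Fin n, (i : ℕ) < j → (i : ℕ) % k = (j : ℕ) % k → g i ≠ g j :=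
    fun i j hij hmod => (hg.lt_of_add_le_of_card_fiber_le hmult <| by
      have := Nat.le_of_dvd (by omega) ((Nat.modEq_iff_dvd' hij.le).1 hmod)
      omega).ne
  intro i hi j hj hgij
  rcases lt_trichotomy (i : ℕ) j with h | h | h
  · exact absurd hgij (key i j h (hi.trans hj.symm))
  · exact Fin.ext h
  · exact absurd hgij.symm (key j i h (hj.trans hi.symm))

theorem exists_surjective_injOn_fibers_of_card_fiber_le (hk : 0 < k) (hkn : k ≤ n)
    (f : Fin n → α) (hmult : ∀ z, #{i | f i = z} ≤ k) :
    ∃ c : Fin n → Fin k, Function.Surjective c ∧ ∀ r, Set.InjOn f {i | c i = r} := by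
  obtain ⟨σ, hσ⟩ : ∃ σ : Equiv.Perm (Fin n), Monotone (f ∘ σ) := ⟨_, Tuple.monotone_sort f⟩
  have hmult' : ∀ z, #{i | (f ∘ σ) i = z} ≤ k := fun z => by
    rw [← card_map σ.toEmbedding]
    convert hmult z using 2
    ext i
    simp
  refine ⟨fun i => ⟨σ.symm i % k, Nat.mod_lt _ hk⟩, fun r => ⟨σ ⟨r, by omega⟩, ?_⟩, fun r => ?_⟩
  · simp [Nat.mod_eq_of_lt r.isLt]
  · intro i hi j hj hij
    have := hσ.injOn_mod_eq_of_card_fiber_le hmult' r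
      (x₁ := σ.symm i) (x₂ := σ.symm j) (by simpa [Fin.ext_iff] using hi)
      (by simpa [Fin.ext_iff] using hj) (by simpa using hij)
    simpa using this

end SortedColoring

theorem s_k_upper_bound_prime (p : ℕ) (hp : p.Prime) (k : ℕ) (hk : 2 ≤ k)
    (f : Fin (p + k) → ZMod p)
    (hmult : ∀ z : ZMod p, (Finset.univ.filter fun i => f i = z).card ≤ k) :
    ∃ I : Finset (Fin (p + k)), I.card = p ∧ ∑ i ∈ I, f i = 0 := by
  have : NeZero p := ⟨hp.ne_zero⟩
  let : LinearOrder (ZMod p) := LinearOrder.lift' ZMod.val (ZMod.val_injective p)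
  obtain ⟨c, hc, hinj⟩ :=
    exists_surjective_injOn_fibers_of_card_fiber_le (k := k) (by omega) (by omega) f
      (by convert hmult)
  exact ZMod.exists_card_eq_sum_eq_zero_of_injOn_fibers hp f c hc hinj (by simp)
end

section
/- Let n = p_1 ⋯ p_r be a squarefree product of distinct odd primes. Let x_1, ..., x_m be pairwise distinct elements of Z_n with m ≥ 2, where each x_i = u_i · ∏_{j ∈ A_i} p_j for some unit u_i ∈ Z_n^* and subset A_i ⊆ {1,...,r}. Suppose that for each i, ⋂_{j ≠ i} A_j = ∅. Then there exist units a_1, ..., a_m ∈ Z_n^* with ∑_{i=1}^m a_i x_i = 0 in Z_n. -/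
/-!
Via the Chinese remainder theorem `ZMod n ≃ Π j, ZMod p_j`, it suffices to find, for each prime
`p_j` separately, nonzero weights `v_i ∈ ZMod p_j` with `∑ v_i x_i = 0` there. The hypothesis on the
sets `A_i` says that, modulo `p_j`, at least two of the `x_i` are nonzero. Put weight `1` on all the
others and absorb their sum `c` with the two remaining weights: `a y + b y' = c` has a solution with
`a, b ≠ 0` as soon as the field has an element other than `0` and `c`, true since `p_j > 2`.
-/

open Finset Function

theorem exists_ne_zero_mul_add_mul_eq {F : Type*} [Field F] [Fintype F]
    (hF : 2 < Fintype.card F) {y y' : F} (hy : y ≠ 0) (hy' : y' ≠ 0) (c : F) :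
    ∃ a b : F, a ≠ 0 ∧ b ≠ 0 ∧ a * y + b * y' = c := by
  classical
  have hcard : #({0, c} : Finset F) < #(univ : Finset F) :=
    card_le_two.trans_lt (by rwa [card_univ])
  obtain ⟨z, -, hz⟩ := exists_mem_notMem_of_card_lt_card hcard
  simp only [mem_insert, mem_singleton, not_or] at hz
  refine ⟨z * y⁻¹, (c - z) * y'⁻¹, by simp [hz.1, hy], by simp [sub_eq_zero, Ne.symm hz.2, hy'], ?_⟩
  field_simp
  ring

theorem exists_ne_zero_weights_sum_mul_eq_zero {F ι : Type*} [Field F] [Fintype F] [Fintype ι]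
    (hF : 2 < Fintype.card F) (y : ι → F) (hy : ∀ i, ∃ j ≠ i, y j ≠ 0) :
    ∃ v : ι → F, (∀ i, v i ≠ 0) ∧ ∑ i, v i * y i = 0 := by
  classical
  cases isEmpty_or_nonempty ι with
  | inl _ => exact ⟨1, isEmptyElim, by simp⟩
  | inr hne =>
    obtain ⟨j₁, -, hj₁⟩ := hy hne.some
    obtain ⟨j₂, hj₂₁, hj₂⟩ := hy j₁
    obtain ⟨a, b, ha, hb, hab⟩ :=
      exists_ne_zero_mul_add_mul_eq hF hj₁ hj₂ (-∑ i ∈ {j₁, j₂}ᶜ, y i)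
    refine ⟨fun i => if i = j₁ then a else if i = j₂ then b else 1, fun i => ?_, ?_⟩
    · dsimp only
      split_ifs
      exacts [ha, hb, one_ne_zero]
    · have hrest : ∑ i ∈ {j₁, j₂}ᶜ, (if i = j₁ then a else if i = j₂ then b else 1) * y i
          = ∑ i ∈ {j₁, j₂}ᶜ, y i :=
        sum_congr rfl fun i hi => by
          simp only [mem_compl, mem_insert, mem_singleton, not_or] at hi
          simp [hi.1, hi.2]
      rw [← sum_add_sum_compl {j₁, j₂}, hrest, sum_pair hj₂₁.symm]
      dsimp only
      rw [if_pos rfl, if_neg hj₂₁, if_pos rfl, hab, neg_add_cancel]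

theorem isUnit_prod_natCast_of_notMem {κ : Type*} {p : κ → ℕ} (hcop : Pairwise (Nat.Coprime on p))
    {s : Finset κ} {t : κ} (ht : t ∉ s) : IsUnit (∏ k ∈ s, (p k : ZMod (p t))) :=
  IsUnit.prod_iff.2 fun _ hk =>
    (ZMod.isUnit_iff_coprime _ _).2 (hcop fun hkt => ht (hkt ▸ hk))

theorem exists_isUnit_weights_of_forall_factor {ι κ : Type*} [Fintype ι] [Fintype κ]
    {p : κ → ℕ} (hcop : Pairwise (Nat.Coprime on p)) (x : ι → ZMod (∏ t, p t))
    (h : ∀ t, ∃ v : ι → ZMod (p t), (∀ i, IsUnit (v i)) ∧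
      ∑ i, v i * ZMod.castHom (dvd_prod_of_mem p (mem_univ t)) _ (x i) = 0) :
    ∃ a : ι → ZMod (∏ t, p t), (∀ i, IsUnit (a i)) ∧ ∑ i, a i * x i = 0 := by
  choose v hunit hsum using h
  let e := ZMod.prodEquivPi p hcop
  refine ⟨fun i => e.symm fun t => v t i, fun i => (Pi.isUnit_iff.2 fun t => hunit t i).map e.symm,
    e.injective ?_⟩
  funext t
  simp only [map_sum, map_mul, map_zero, Finset.sum_apply, Pi.mul_apply, Pi.zero_apply,
    RingEquiv.apply_symm_apply]
  simpa only [e, ZMod.prodEquivPi_apply] using hsum t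

theorem exists_unit_weights_zero_sum_general (r : ℕ) (p : Fin r → ℕ)
    (hp : ∀ i, (p i).Prime) (hodd : ∀ i, Odd (p i)) (hinj : Function.Injective p)
    (n : ℕ) (hn : n = ∏ i, p i) (m : ℕ)
    (x : Fin m → ZMod n)
    (u : Fin m → ZMod n) (hu : ∀ i, IsUnit (u i))
    (A : Fin m → Finset (Fin r))
    (hxA : ∀ i, x i = u i * ∏ j ∈ A i, (p j : ZMod n))
    (hcap : ∀ i : Fin m, ∀ t : Fin r, ¬ ∀ j : Fin m, j ≠ i → t ∈ A j) :
    ∃ a : Fin m → ZMod n, (∀ i, IsUnit (a i)) ∧ ∑ i, a i * x i = 0 := by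
  subst hn
  have hcop : Pairwise (Nat.Coprime on p) := fun i j hij =>
    (Nat.coprime_primes (hp i) (hp j)).2 (hinj.ne hij)
  refine exists_isUnit_weights_of_forall_factor hcop x fun t => ?_
  have := Fact.mk (hp t)
  have hcard : 2 < Fintype.card (ZMod (p t)) := by
    rw [ZMod.card]
    exact (hp t).two_le.lt_of_ne fun h => Nat.not_even_iff_odd.2 (hodd t) (h ▸ even_two)
  obtain ⟨v, hv, hsum⟩ := exists_ne_zero_weights_sum_mul_eq_zero hcard
    (fun i => ZMod.castHom (dvd_prod_of_mem p (mem_univ t)) _ (x i)) fun i => by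
    obtain ⟨j, hji, htj⟩ : ∃ j, j ≠ i ∧ t ∉ A j := by simpa using hcap i t
    refine ⟨j, hji, ?_⟩
    rw [hxA j, map_mul, map_prod]
    simp only [map_natCast]
    exact ((hu j).map _).mul (isUnit_prod_natCast_of_notMem hcop htj) |>.ne_zero
  exact ⟨v, fun i => (hv i).isUnit, hsum⟩

theorem exists_unit_weights_zero_sum (r : ℕ) (p : Fin r → ℕ)
    (hp : ∀ i, (p i).Prime) (hodd : ∀ i, Odd (p i)) (hinj : Function.Injective p)
    (n : ℕ) (hn : n = ∏ i, p i) (m : ℕ) (hm : 2 ≤ m)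
    (x : Fin m → ZMod n) (hx : Function.Injective x)
    (u : Fin m → ZMod n) (hu : ∀ i, IsUnit (u i))
    (A : Fin m → Finset (Fin r))
    (hxA : ∀ i, x i = u i * ∏ j ∈ A i, (p j : ZMod n))
    (hcap : ∀ i : Fin m, ∀ t : Fin r, ¬ ∀ j : Fin m, j ≠ i → t ∈ A j) :
    ∃ a : Fin m → ZMod n, (∀ i, IsUnit (a i)) ∧ ∑ i, a i * x i = 0 :=
  exists_unit_weights_zero_sum_general r p hp hodd hinj n hn m x u hu A hxA hcap
end
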